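/- arXiv:2206.13124 — 8 statements merged into one kernel-verified Lean document; each statement's English description precedes it below -/
import Mathlib

section
/- Let n ≥ 1 and let each agent i ∈ {1,…,n} have value v_i ≥ 0 and cost c_i ≥ 0, with budget B > 0. Suppose the agents are ordered by non-increasing efficiency, i.e., v_i·c_j ≥ v_j·c_i for all i ≤ j. Let x* ∈ [0,1]^n be feasible, i.e., Σ_{i=1}^n c_i·x*_i ≤ B, and set V := Σ_{i=1}^n v_i·x*_i. Let α ∈ (0,1] and let k ∈ {1,…,n} be an index such that Σ_{i=1}^{k-1} v_i·x*_i < α·V and α·V ≤ Σ_{i=1}^{k} v_i·x*_i. Then c_k·(1−α)·V ≤ v_k·B. -/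
/-- Lemma 3 of the paper: if agents are ordered by non-increasing efficiency and the
first `k` agents of a feasible fractional solution capture a fraction `α` of its value,
then `c k * (1 - α) * V ≤ v k * B`. -/
theorem stmt_0 (n : ℕ) (hn : 1 ≤ n) (v c : Fin n → ℝ) (B : ℝ)
    (hv : ∀ i, 0 ≤ v i) (hc : ∀ i, 0 ≤ c i) (hB : 0 < B)
    (hord : ∀ i j : Fin n, i ≤ j → v j * c i ≤ v i * c j)
    (x : Fin n → ℝ) (hx : ∀ i, x i ∈ Set.Icc (0:ℝ) 1)
    (hfeas : ∑ i, c i * x i ≤ B)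
    (V : ℝ) (hV : V = ∑ i, v i * x i)
    (α : ℝ) (hα : α ∈ Set.Ioc (0:ℝ) 1)
    (k : Fin n)
    (hk1 : ∑ i ∈ Finset.univ.filter (fun i => i < k), v i * x i < α * V)
    (hk2 : α * V ≤ ∑ i ∈ Finset.univ.filter (fun i => i ≤ k), v i * x i) :
    c k * ((1 - α) * V) ≤ v k * B := by
  have hxnn : ∀ i, 0 ≤ x i := fun i => (hx i).1
  have hsplit :
      (∑ i ∈ Finset.univ.filter (fun i => i < k), v i * x i)
        + ∑ i ∈ Finset.univ.filter (fun i => ¬ i < k), v i * x i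
        = ∑ i, v i * x i :=
    Finset.sum_filter_add_sum_filter_not _ _ _
  have h1 : (1 - α) * V ≤ ∑ i ∈ Finset.univ.filter (fun i => ¬ i < k), v i * x i := by
    have : (1 - α) * V = V - α * V := by ring
    rw [this]
    linarith [hsplit, hV, hk1]
  have h2 : c k * ((1 - α) * V)
      ≤ ∑ i ∈ Finset.univ.filter (fun i => ¬ i < k), v k * (c i * x i) := by
    calc c k * ((1 - α) * V)
        ≤ c k * ∑ i ∈ Finset.univ.filter (fun i => ¬ i < k), v i * x i :=
          mul_le_mul_of_nonneg_left h1 (hc k)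
      _ = ∑ i ∈ Finset.univ.filter (fun i => ¬ i < k), c k * (v i * x i) := by
          rw [Finset.mul_sum]
      _ ≤ ∑ i ∈ Finset.univ.filter (fun i => ¬ i < k), v k * (c i * x i) := by
          apply Finset.sum_le_sum
          intro i hi
          have hki : k ≤ i := le_of_not_gt (by simpa using hi)
          have := hord k i hki
          have := hxnn i
          nlinarith
  have h3 : ∑ i ∈ Finset.univ.filter (fun i => ¬ i < k), v k * (c i * x i)
      ≤ v k * B := by
    rw [← Finset.mul_sum]
    apply mul_le_mul_of_nonneg_left _ (hv k)
    calc ∑ i ∈ Finset.univ.filter (fun i => ¬ i < k), c i * x i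
        ≤ ∑ i, c i * x i := by
          apply Finset.sum_le_sum_of_subset_of_nonneg (Finset.filter_subset _ _)
          intro i _ _
          exact mul_nonneg (hc i) (hxnn i)
      _ ≤ B := hfeas
  linarith
end

section
/- Let n ≥ 1, t ≥ 1, B > 0, α ∈ (0,1] and β > 0. Let each agent i ∈ {1,…,n} have cost c_i ≥ 0 and marginal value v*_i ≥ 0, ordered so that v*_i·c_j ≥ v*_j·c_i for all i ≤ j. Let x* ∈ [0,1]^n satisfy Σ_{i=1}^n c_i·x*_i ≤ B, and set V := Σ_{i=1}^n v*_i. Assume: (a) v*_i = 0 whenever x*_i = 0; (b) v*_i ≤ β·V for every i; and let k ∈ {1,…,n} satisfy Σ_{i=1}^{k-1} v*_i < α·V ≤ Σ_{i=1}^{k} v*_i. If the set S := { i : k ≤ i ≤ n and 0 < x*_i < 1 } has at most t elements, then c_k·(1 − α − t·β)·V ≤ v*_k·B. -/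
/-- Lemma 11 of the paper (abstracted form): with marginal values `vs` ordered by
non-increasing ratio `vs i / c i`, each bounded by `β·V`, vanishing on unselected
agents, and at most `t` agents from index `k` on fractionally selected,
`c k * (1 - α - t·β) * V ≤ vs k * B`. -/
theorem stmt_2 (n t : ℕ) (hn : 1 ≤ n) (ht : 1 ≤ t) (B : ℝ) (hB : 0 < B)
    (α β : ℝ) (hα : α ∈ Set.Ioc (0:ℝ) 1) (hβ : 0 < β)
    (c vs : Fin n → ℝ) (hc : ∀ i, 0 ≤ c i) (hvs : ∀ i, 0 ≤ vs i)
    (hord : ∀ i j : Fin n, i ≤ j → vs j * c i ≤ vs i * c j)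
    (xs : Fin n → ℝ) (hxs : ∀ i, xs i ∈ Set.Icc (0:ℝ) 1)
    (hfeas : ∑ i, c i * xs i ≤ B)
    (V : ℝ) (hV : V = ∑ i, vs i)
    (ha : ∀ i, xs i = 0 → vs i = 0)
    (hb : ∀ i, vs i ≤ β * V)
    (k : Fin n)
    (hk1 : ∑ i ∈ Finset.univ.filter (fun i => i < k), vs i < α * V)
    (hk2 : α * V ≤ ∑ i ∈ Finset.univ.filter (fun i => i ≤ k), vs i)
    (hS : (Finset.univ.filter (fun i : Fin n => k ≤ i ∧ 0 < xs i ∧ xs i < 1)).card ≤ t) :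
    c k * ((1 - α - (t : ℝ) * β) * V) ≤ vs k * B := by
  have hV0 : 0 ≤ V := hV ▸ Finset.sum_nonneg (fun i _ => hvs i)
  set T := Finset.univ.filter (fun i : Fin n => k ≤ i ∧ xs i = 1) with hT
  set F := Finset.univ.filter (fun i : Fin n => k ≤ i ∧ 0 < xs i ∧ xs i < 1) with hF
  set A := Finset.univ.filter (fun i : Fin n => k ≤ i) with hA
  -- split V
  have hsplit : ∑ i ∈ Finset.univ.filter (fun i => i < k), vs i + ∑ i ∈ A, vs i = V := by
    rw [hV, hA]
    have := Finset.sum_filter_add_sum_filter_not Finset.univ (fun i : Fin n => i < k) vs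
    simpa using this
  have hAge : (1 - α) * V ≤ ∑ i ∈ A, vs i := by nlinarith [hk1, hsplit]
  -- T and F disjoint, union covers A up to zero values
  have hdisj : Disjoint T F := by
    rw [Finset.disjoint_left]
    intro i hiT hiF
    simp only [hT, hF, Finset.mem_filter] at hiT hiF
    linarith [hiT.2.2, hiF.2.2.2]
  have hsub : T ∪ F ⊆ A := by
    intro i hi
    simp only [hT, hF, hA, Finset.mem_union, Finset.mem_filter] at hi ⊢
    rcases hi with h | h
    · exact ⟨h.1, h.2.1⟩
    · exact ⟨h.1, h.2.1⟩
  have hzero : ∀ i ∈ A, i ∉ T ∪ F → vs i = 0 := by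
    intro i hiA hiTF
    simp only [hT, hF, hA, Finset.mem_union, Finset.mem_filter, Finset.mem_univ,
      true_and, not_or, not_and, not_lt] at hiA hiTF
    obtain ⟨h1, h2⟩ := hiTF
    have hx := hxs i
    have hne : xs i ≠ 1 := fun h => (h1 hiA) h
    by_cases hpos : 0 < xs i
    · have := h2 hiA hpos
      have : xs i = 1 := le_antisymm hx.2 this
      exact absurd this hne
    · exact ha i (le_antisymm (not_lt.mp hpos) hx.1)
  have hAsum : ∑ i ∈ A, vs i = ∑ i ∈ T, vs i + ∑ i ∈ F, vs i := by
    rw [← Finset.sum_union hdisj]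
    exact (Finset.sum_subset hsub (fun i hi hni => hzero i hi hni)).symm
  -- bound fractional part
  have hFsum : ∑ i ∈ F, vs i ≤ (t : ℝ) * (β * V) := by
    calc ∑ i ∈ F, vs i ≤ F.card • (β * V) :=
          Finset.sum_le_card_nsmul F vs (β * V) (fun i _ => hb i)
      _ = (F.card : ℝ) * (β * V) := by rw [nsmul_eq_mul]
      _ ≤ (t : ℝ) * (β * V) := by
          apply mul_le_mul_of_nonneg_right _ (by positivity)
          exact_mod_cast hS
  have hTsum : (1 - α - (t : ℝ) * β) * V ≤ ∑ i ∈ T, vs i := by nlinarith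
  -- budget bound on T
  have hTc : ∑ i ∈ T, c i ≤ B := by
    have h1 : ∑ i ∈ T, c i = ∑ i ∈ T, c i * xs i := by
      apply Finset.sum_congr rfl
      intro i hi
      simp only [hT, Finset.mem_filter] at hi
      rw [hi.2.2, mul_one]
    have h2 : ∑ i ∈ T, c i * xs i ≤ ∑ i, c i * xs i := by
      apply Finset.sum_le_sum_of_subset_of_nonneg (Finset.subset_univ T)
      intro i _ _
      exact mul_nonneg (hc i) (hxs i).1
    linarith
  -- ordering
  have hord' : c k * ∑ i ∈ T, vs i ≤ vs k * ∑ i ∈ T, c i := by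
    rw [Finset.mul_sum, Finset.mul_sum]
    apply Finset.sum_le_sum
    intro i hi
    simp only [hT, Finset.mem_filter] at hi
    have := hord k i hi.2.1
    linarith
  have hck : 0 ≤ c k := hc k
  have hvk : 0 ≤ vs k := hvs k
  calc c k * ((1 - α - (t : ℝ) * β) * V) ≤ c k * ∑ i ∈ T, vs i :=
        mul_le_mul_of_nonneg_left hTsum hck
    _ ≤ vs k * ∑ i ∈ T, c i := hord'
    _ ≤ vs k * B := mul_le_mul_of_nonneg_left hTc hvk
end

section
/- Let B > 0 and consider two divisible agents with values v_1 = v_2 = 1. Suppose x : [0,B]² → [0,1]² and p : [0,B]² → ℝ² satisfy: (1) truthfulness: for each agent i ∈ {1,2}, all c, b ∈ [0,B]² differing only in coordinate i, p_i(c) − c_i·x_i(c) ≥ p_i(b) − c_i·x_i(b); (2) individual rationality: p_i(b) ≥ b_i·x_i(b) for all i and all b ∈ [0,B]²; (3) budget feasibility: p_1(b) + p_2(b) ≤ B for all b ∈ [0,B]²; and (4) γ-approximation for some γ ≥ 1: γ·(x_1(b) + x_2(b)) ≥ opt(b) for all b ∈ [0,B]², where opt(b) := sup{ y_1 + y_2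 : y ∈ [0,1]², b_1·y_1 + b_2·y_2 ≤ B }. Then γ ≥ 5/4. -/
/-- Optimal fractional knapsack value for two unit-value divisible agents. -/
noncomputable def opt2 (B : ℝ) (b : Fin 2 → ℝ) : ℝ :=
  sSup { s : ℝ | ∃ y : Fin 2 → ℝ, (∀ i, y i ∈ Set.Icc (0:ℝ) 1) ∧
    (∑ i, b i * y i) ≤ B ∧ s = ∑ i, y i }

lemma opt2_ge (B : ℝ) (b y : Fin 2 → ℝ) (hy : ∀ i, y i ∈ Set.Icc (0:ℝ) 1)
    (hc : (∑ i, b i * y i) ≤ B) : (∑ i, y i) ≤ opt2 B b := by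
  apply le_csSup
  · refine ⟨2, ?_⟩
    rintro s ⟨z, hz, -, rfl⟩
    have h0 := hz 0
    have h1 := hz 1
    simp only [Set.mem_Icc] at h0 h1
    rw [Fin.sum_univ_two]
    linarith
  · exact ⟨y, hy, hc, rfl⟩

/-- Lower bound of Section 3 of the paper: no deterministic truthful, individually
rational, budget feasible mechanism for two divisible unit-value agents (with costs
bounded by the budget) has an approximation guarantee better than 5/4. -/
theorem stmt_7 (B : ℝ) (hB : 0 < B)
    (x p : (Fin 2 → ℝ) → (Fin 2 → ℝ)) (γ : ℝ) (hγ : 1 ≤ γ)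
    -- allocations lie in [0,1]²
    (hx : ∀ b : Fin 2 → ℝ, (∀ j, b j ∈ Set.Icc 0 B) → ∀ i, x b i ∈ Set.Icc (0:ℝ) 1)
    -- truthfulness
    (htruth : ∀ (i : Fin 2) (c b : Fin 2 → ℝ), (∀ j, c j ∈ Set.Icc 0 B) →
      (∀ j, b j ∈ Set.Icc 0 B) → (∀ j, j ≠ i → c j = b j) →
      p c i - c i * x c i ≥ p b i - c i * x b i)
    -- individual rationality
    (hir : ∀ b : Fin 2 → ℝ, (∀ j, b j ∈ Set.Icc 0 B) → ∀ i, b i * x b i ≤ p b i)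
    -- budget feasibility
    (hbf : ∀ b : Fin 2 → ℝ, (∀ j, b j ∈ Set.Icc 0 B) → p b 0 + p b 1 ≤ B)
    -- γ-approximation
    (happ : ∀ b : Fin 2 → ℝ, (∀ j, b j ∈ Set.Icc 0 B) →
      γ * (x b 0 + x b 1) ≥ opt2 B b) :
    γ ≥ 5 / 4 := by
  set cc : Fin 2 → ℝ := ![B/2, B/2] with hcc
  set dd : Fin 2 → ℝ := ![B, B/2] with hdd
  set ee : Fin 2 → ℝ := ![B/2, B] with hee
  have hccmem : ∀ j, cc j ∈ Set.Icc (0:ℝ) B := by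
    intro j; fin_cases j <;> simp [hcc] <;> first | (constructor <;> linarith) | linarith
  have hddmem : ∀ j, dd j ∈ Set.Icc (0:ℝ) B := by
    intro j; fin_cases j <;> simp [hdd] <;> first | (constructor <;> linarith) | linarith
  have heemem : ∀ j, ee j ∈ Set.Icc (0:ℝ) B := by
    intro j; fin_cases j <;> simp [hee] <;> first | (constructor <;> linarith) | linarith
  -- opt at cc is ≥ 2 (witness y = (1,1))
  have hoptc : (2:ℝ) ≤ opt2 B cc := by
    have := opt2_ge B cc ![1, 1] (by intro i; fin_cases i <;> norm_num)
      (by rw [Fin.sum_univ_two]; simp [hcc]; try linarith)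
    rw [Fin.sum_univ_two] at this; norm_num at this; linarith
  -- opt at dd and ee is ≥ 3/2 (witness (1/2,1) resp (1,1/2))
  have hoptd : (3/2:ℝ) ≤ opt2 B dd := by
    have := opt2_ge B dd ![1/2, 1] (by intro i; fin_cases i <;> norm_num)
      (by rw [Fin.sum_univ_two]; simp [hdd]; try linarith)
    rw [Fin.sum_univ_two] at this; norm_num at this; linarith
  have hopte : (3/2:ℝ) ≤ opt2 B ee := by
    have := opt2_ge B ee ![1, 1/2] (by intro i; fin_cases i <;> norm_num)
      (by rw [Fin.sum_univ_two]; simp [hee]; try linarith)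
    rw [Fin.sum_univ_two] at this; norm_num at this; linarith
  -- approximation guarantees
  have hac : γ * (x cc 0 + x cc 1) ≥ 2 := le_trans hoptc (happ cc hccmem)
  have had : γ * (x dd 0 + x dd 1) ≥ 3/2 := le_trans hoptd (happ dd hddmem)
  have hae : γ * (x ee 0 + x ee 1) ≥ 3/2 := le_trans hopte (happ ee heemem)
  -- allocation bounds
  have hxd1 : x dd 1 ≤ 1 := (hx dd hddmem 1).2
  have hxe0 : x ee 0 ≤ 1 := (hx ee heemem 0).2
  -- truthfulness: agent 0 at cc deviating to dd
  have ht0 : p cc 0 - cc 0 * x cc 0 ≥ p dd 0 - cc 0 * x dd 0 := by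
    apply htruth 0 cc dd hccmem hddmem
    intro j hj
    fin_cases j
    · exact absurd rfl hj
    · simp [hcc, hdd]
  -- truthfulness: agent 1 at cc deviating to ee
  have ht1 : p cc 1 - cc 1 * x cc 1 ≥ p ee 1 - cc 1 * x ee 1 := by
    apply htruth 1 cc ee hccmem heemem
    intro j hj
    fin_cases j
    · simp [hcc, hee]
    · exact absurd rfl hj
  -- IR at dd for agent 0, at ee for agent 1
  have hird : B * x dd 0 ≤ p dd 0 := by
    have := hir dd hddmem 0; simpa [hdd] using this
  have hire : B * x ee 1 ≤ p ee 1 := by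
    have := hir ee heemem 1; simpa [hee] using this
  have hbud : p cc 0 + p cc 1 ≤ B := hbf cc hccmem
  have hcc0 : cc 0 = B/2 := by simp [hcc]
  have hcc1 : cc 1 = B/2 := by simp [hcc]
  rw [hcc0] at ht0
  rw [hcc1] at ht1
  -- combine: B ≥ p cc 0 + p cc 1 ≥ (B/2)(x cc 0 + x cc 1 + x dd 0 + x ee 1)
  have hkey : B ≥ (B/2) * (x cc 0 + x cc 1 + x dd 0 + x ee 1) := by nlinarith
  have hγpos : (0:ℝ) < γ := lt_of_lt_of_le one_pos hγ
  nlinarith [mul_le_mul_of_nonneg_left hkey (le_of_lt hγpos), hB, hγpos,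
    mul_pos hB hγpos]
end

section
/- Let θ ≥ 1 and B > 0, and consider two divisible agents with values v_1 = v_2 = 1. Call b ∈ [0,B]² θ-competitive if max(b_1,b_2) ≤ θ·min(b_1,b_2). Suppose x : [0,B]² → [0,1]² and p : [0,B]² → ℝ² satisfy, for all θ-competitive cost vectors: (1) truthfulness: for each agent i and all θ-competitive c, b ∈ [0,B]² differing only in coordinate i, p_i(c) − c_i·x_i(c) ≥ p_i(b) − c_i·x_i(b); (2) individual rationality: p_i(b) ≥ b_i·x_i(b) for all i and all θ-competitive b; (3) budget feasibility: p_1(b) + p_2(b) ≤ B for all θ-competitive b; and (4) γ-approximation for some γ ≥ 1: γ·(x_1(b) + x_2(b)) ≥ opt(b) for all θ-competitive b, where opt(b) := sup{ y_1 + y_2 : y ∈ [0,1]², b_1·y_1 + b_2·y_2 ≤ B }. Then γ ≥ (5θ² − 1)/(4θ²). -/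
/-- With unit values, a two-agent cost vector is θ-competitive if
`max(b 0, b 1) ≤ θ * min(b 0, b 1)`. -/
def ThetaComp2 (θ : ℝ) (b : Fin 2 → ℝ) : Prop :=
  max (b 0) (b 1) ≤ θ * min (b 0) (b 1)

/-!
Take costs `L < H = θ L` with `L + H = B`. At `(L, H)` the optimum is `2`, so the mechanism must
allocate at least `2 / γ` in total. Truthfulness forces agent `0` to be paid at least
`(H - L) x₀(H, H)` beyond its cost, since it could misreport `H`, and individual rationality forces
agent `1` to be paid at least `H x₁(L, H)`; the budget then caps the total allocation at `(L, H)`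
in terms of `x₀(H, H)`, and symmetrically at `(H, L)` in terms of `x₁(H, H)`. Adding the two
bounds and using that `(H, H)` must also be approximated (its optimum is `B / H`) gives
`4 γ H² ≥ 5 H² - L²`.
-/

open Set Function

structure IsTruthfulBudgetFeasible (θ B : ℝ) (x p : (Fin 2 → ℝ) → (Fin 2 → ℝ)) : Prop where
  alloc_mem : ∀ b : Fin 2 → ℝ, (∀ j, b j ∈ Icc 0 B) → ∀ i, x b i ∈ Icc (0:ℝ) 1
  truthful : ∀ (i : Fin 2) (c b : Fin 2 → ℝ), (∀ j, c j ∈ Icc 0 B) →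
      (∀ j, b j ∈ Icc 0 B) → ThetaComp2 θ c → ThetaComp2 θ b →
      (∀ j, j ≠ i → c j = b j) →
      p c i - c i * x c i ≥ p b i - c i * x b i
  indiv_rational : ∀ b : Fin 2 → ℝ, (∀ j, b j ∈ Icc 0 B) → ThetaComp2 θ b →
      ∀ i, b i * x b i ≤ p b i
  budget_feasible : ∀ b : Fin 2 → ℝ, (∀ j, b j ∈ Icc 0 B) → ThetaComp2 θ b →
      p b 0 + p b 1 ≤ B

def IsApprox (θ B γ : ℝ) (x : (Fin 2 → ℝ) → (Fin 2 → ℝ)) : Prop :=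
  ∀ b : Fin 2 → ℝ, (∀ j, b j ∈ Icc 0 B) → ThetaComp2 θ b →
    γ * (x b 0 + x b 1) ≥ opt2 B b

lemma Fin.apply_add_apply_rev {M : Type*} [AddCommMagma M] (f : Fin 2 → M) (i : Fin 2) :
    f i + f i.rev = f 0 + f 1 := by
  fin_cases i
  · rfl
  · exact add_comm _ _

lemma Fin.rev_ne_self_two (i : Fin 2) : i.rev ≠ i := by
  fin_cases i <;> decide

section Opt2

lemma le_opt2 {B : ℝ} {b y : Fin 2 → ℝ} (hy : ∀ i, y i ∈ Icc (0:ℝ) 1)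
    (hcost : ∑ i, b i * y i ≤ B) : ∑ i, y i ≤ opt2 B b := by
  refine le_csSup ⟨2, ?_⟩ ⟨y, hy, hcost, rfl⟩
  rintro _ ⟨z, hz, -, rfl⟩
  rw [Fin.sum_univ_two]
  linarith [(hz 0).2, (hz 1).2]

lemma two_le_opt2 {B : ℝ} {b : Fin 2 → ℝ} (hb : b 0 + b 1 ≤ B) : 2 ≤ opt2 B b := by
  simpa [Fin.sum_univ_two, one_add_one_eq_two] using
    le_opt2 (b := b) (y := 1) (fun _ => ⟨zero_le_one, le_rfl⟩)
      (by simpa [Fin.sum_univ_two] using hb)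

lemma div_le_opt2_const {B c : ℝ} (hc : 0 < c) (hB : 0 ≤ B) (hBc : B ≤ 2 * c) :
    B / c ≤ opt2 B (fun _ => c) := by
  have hy : B / (2 * c) ∈ Icc (0:ℝ) 1 :=
    ⟨by positivity, (div_le_one (by positivity)).2 hBc⟩
  have := le_opt2 (B := B) (b := fun _ => c) (fun _ => hy) (le_of_eq (by
    rw [Fin.sum_univ_two]; field_simp; ring))
  rw [Fin.sum_univ_two] at this
  convert this using 1
  field_simp
  ring

end Opt2

lemma thetaComp2_of_forall_mem_Icc {θ L : ℝ} {b : Fin 2 → ℝ} (hθ : 0 ≤ θ)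
    (hb : ∀ j, b j ∈ Icc L (θ * L)) : ThetaComp2 θ b :=
  (max_le (hb 0).2 (hb 1).2).trans (mul_le_mul_of_nonneg_left (le_min (hb 0).1 (hb 1).1) hθ)

section Mechanism

variable {θ B γ L H : ℝ} {x p : (Fin 2 → ℝ) → (Fin 2 → ℝ)}

lemma admissible_of_forall_mem_Icc (hθ : 0 ≤ θ) (hL : 0 ≤ L) (hHθ : H ≤ θ * L) (hHB : H ≤ B)
    {b : Fin 2 → ℝ} (hb : ∀ j, b j ∈ Icc L H) :
    (∀ j, b j ∈ Icc 0 B) ∧ ThetaComp2 θ b :=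
  ⟨fun j => Icc_subset_Icc hL hHB (hb j),
    thetaComp2_of_forall_mem_Icc hθ fun j => Icc_subset_Icc le_rfl hHθ (hb j)⟩

lemma update_const_mem_Icc (hLH : L ≤ H) (i j : Fin 2) :
    update (fun _ => H) i L j ∈ Icc L H := by
  rw [update_apply]
  split_ifs
  exacts [⟨le_rfl, hLH⟩, ⟨hLH, le_rfl⟩]

lemma mul_sum_alloc_update_le (hM : IsTruthfulBudgetFeasible θ B x p) (hθ : 0 ≤ θ)
    (hL : 0 ≤ L) (hLH : L ≤ H) (hHθ : H ≤ θ * L) (hHB : H ≤ B) (i : Fin 2) :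
    H * (x (update (fun _ => H) i L) 0 + x (update (fun _ => H) i L) 1) ≤
      B + (H - L) * (1 - x (fun _ => H) i) := by
  set h : Fin 2 → ℝ := fun _ => H
  set c := update h i L
  obtain ⟨hhB, hhθ⟩ := admissible_of_forall_mem_Icc hθ hL hHθ hHB (b := h) fun _ => ⟨hLH, le_rfl⟩
  obtain ⟨hcB, hcθ⟩ :=
    admissible_of_forall_mem_Icc hθ hL hHθ hHB (b := c) (update_const_mem_Icc hLH i)
  have hci : c i = L := update_self ..
  have hcj : c i.rev = H := update_of_ne (Fin.rev_ne_self_two i) ..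
  have hdev : (H - L) * x h i ≤ p c i - L * x c i := by
    have htruth := hM.truthful i c h hcB hhB hcθ hhθ fun j hj => update_of_ne hj ..
    have hir := hM.indiv_rational h hhB hhθ i
    rw [hci] at htruth
    linarith
  have hother : H * x c i.rev ≤ p c i.rev := hcj ▸ hM.indiv_rational c hcB hcθ i.rev
  have hbudget : p c i + p c i.rev ≤ B :=
    (Fin.apply_add_apply_rev (p c) i).symm ▸ hM.budget_feasible c hcB hcθ
  have hxc : x c i ≤ 1 := (hM.alloc_mem c hcB i).2
  rw [← Fin.apply_add_apply_rev (x c) i]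
  linarith [mul_nonneg (sub_nonneg.2 hLH) (sub_nonneg.2 hxc)]

lemma two_mul_le_of_isApprox (hM : IsTruthfulBudgetFeasible θ B x p) (happ : IsApprox θ B γ x)
    (hθ : 0 ≤ θ) (hL : 0 ≤ L) (hLH : L ≤ H) (hHθ : H ≤ θ * L) (hLHB : L + H ≤ B) (i : Fin 2) :
    2 * H ≤ γ * (B + (H - L) * (1 - x (fun _ => H) i)) := by
  set c := update (fun _ => H) i L
  have hHB : H ≤ B := by linarith
  obtain ⟨hcB, hcθ⟩ :=
    admissible_of_forall_mem_Icc hθ hL hHθ hHB (b := c) (update_const_mem_Icc hLH i)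
  have hsum : c 0 + c 1 = L + H := by
    rw [← Fin.apply_add_apply_rev c i]
    exact congr_arg₂ (· + ·) (update_self ..) (update_of_ne (Fin.rev_ne_self_two i) ..)
  have hopt : 2 ≤ γ * (x c 0 + x c 1) := (two_le_opt2 (hsum.trans_le hLHB)).trans (happ c hcB hcθ)
  have hγ : 0 < γ := pos_of_mul_pos_left (two_pos.trans_le hopt)
    (add_nonneg (hM.alloc_mem c hcB 0).1 (hM.alloc_mem c hcB 1).1)
  calc 2 * H ≤ γ * (x c 0 + x c 1) * H := mul_le_mul_of_nonneg_right hopt (hL.trans hLH)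
    _ = γ * (H * (x c 0 + x c 1)) := by ring
    _ ≤ _ := mul_le_mul_of_nonneg_left
      (mul_sum_alloc_update_le hM hθ hL hLH hHθ hHB i) hγ.le

lemma one_add_sq_sub_sq_div_le (hM : IsTruthfulBudgetFeasible θ B x p) (happ : IsApprox θ B γ x)
    (hθ : 0 ≤ θ) (hL : 0 < L) (hLH : L ≤ H) (hHθ : H ≤ θ * L) (hLHB : L + H = B) :
    1 + (H ^ 2 - L ^ 2) / (4 * H ^ 2) ≤ γ := by
  set h : Fin 2 → ℝ := fun _ => H
  have hH : 0 < H := hL.trans_le hLH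
  obtain ⟨hhB, hhθ⟩ :=
    admissible_of_forall_mem_Icc hθ hL.le hHθ (by linarith) (b := h) fun _ => ⟨hLH, le_rfl⟩
  have hdev₀ := two_mul_le_of_isApprox hM happ hθ hL.le hLH hHθ hLHB.le 0
  have hdev₁ := two_mul_le_of_isApprox hM happ hθ hL.le hLH hHθ hLHB.le 1
  have hopt : B ≤ H * (γ * (x h 0 + x h 1)) := by
    rw [← div_le_iff₀' hH]
    exact (div_le_opt2_const hH (by linarith) (by linarith)).trans (happ h hhB hhθ)
  have key : 5 * H ^ 2 - L ^ 2 ≤ 4 * γ * H ^ 2 := by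
    subst hLHB
    linarith [mul_le_mul_of_nonneg_left (add_le_add hdev₀ hdev₁) hH.le,
      mul_le_mul_of_nonneg_left hopt (sub_nonneg.2 hLH)]
  have : (H ^ 2 - L ^ 2) / (4 * H ^ 2) ≤ γ - 1 := by
    rw [div_le_iff₀ (by positivity)]
    linarith
  linarith

end Mechanism

theorem stmt_8_general (θ B : ℝ) (hθ : 1 ≤ θ) (hB : 0 < B)
    (x p : (Fin 2 → ℝ) → (Fin 2 → ℝ)) (γ : ℝ)
    -- allocations lie in [0,1]²
    (hx : ∀ b : Fin 2 → ℝ, (∀ j, b j ∈ Set.Icc 0 B) → ∀ i, x b i ∈ Set.Icc (0:ℝ) 1)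
    -- truthfulness on θ-competitive instances
    (htruth : ∀ (i : Fin 2) (c b : Fin 2 → ℝ), (∀ j, c j ∈ Set.Icc 0 B) →
      (∀ j, b j ∈ Set.Icc 0 B) → ThetaComp2 θ c → ThetaComp2 θ b →
      (∀ j, j ≠ i → c j = b j) →
      p c i - c i * x c i ≥ p b i - c i * x b i)
    -- individual rationality on θ-competitive instances
    (hir : ∀ b : Fin 2 → ℝ, (∀ j, b j ∈ Set.Icc 0 B) → ThetaComp2 θ b →
      ∀ i, b i * x b i ≤ p b i)
    -- budget feasibility on θ-competitive instances
    (hbf : ∀ b : Fin 2 → ℝ, (∀ j, b j ∈ Set.Icc 0 B) → ThetaComp2 θ b →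
      p b 0 + p b 1 ≤ B)
    -- γ-approximation on θ-competitive instances
    (happ : ∀ b : Fin 2 → ℝ, (∀ j, b j ∈ Set.Icc 0 B) → ThetaComp2 θ b →
      γ * (x b 0 + x b 1) ≥ opt2 B b) :
    γ ≥ (5 * θ^2 - 1) / (4 * θ^2) := by
  have hθ₀ : 0 < θ := one_pos.trans_le hθ
  set L := B / (θ + 1)
  have hL : 0 < L := by positivity
  have hLHB : L + θ * L = B := by simp only [L]; field_simp; ring
  have h := one_add_sq_sub_sq_div_le ⟨hx, htruth, hir, hbf⟩ happ hθ₀.le hL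
    (le_mul_of_one_le_left hL.le hθ) le_rfl hLHB
  convert h using 1
  field_simp
  ring

/-- Lower bound of Section 4 / Appendix B of the paper (divisible case): on
θ-competitive instances, no deterministic truthful, individually rational, budget
feasible mechanism has an approximation guarantee better than (5θ²−1)/(4θ²). -/
theorem stmt_8 (θ B : ℝ) (hθ : 1 ≤ θ) (hB : 0 < B)
    (x p : (Fin 2 → ℝ) → (Fin 2 → ℝ)) (γ : ℝ) (hγ : 1 ≤ γ)
    -- allocations lie in [0,1]²
    (hx : ∀ b : Fin 2 → ℝ, (∀ j, b j ∈ Set.Icc 0 B) → ∀ i, x b i ∈ Set.Icc (0:ℝ) 1)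
    -- truthfulness on θ-competitive instances
    (htruth : ∀ (i : Fin 2) (c b : Fin 2 → ℝ), (∀ j, c j ∈ Set.Icc 0 B) →
      (∀ j, b j ∈ Set.Icc 0 B) → ThetaComp2 θ c → ThetaComp2 θ b →
      (∀ j, j ≠ i → c j = b j) →
      p c i - c i * x c i ≥ p b i - c i * x b i)
    -- individual rationality on θ-competitive instances
    (hir : ∀ b : Fin 2 → ℝ, (∀ j, b j ∈ Set.Icc 0 B) → ThetaComp2 θ b →
      ∀ i, b i * x b i ≤ p b i)
    -- budget feasibility on θ-competitive instances
    (hbf : ∀ b : Fin 2 → ℝ, (∀ j, b j ∈ Set.Icc 0 B) → ThetaComp2 θ b →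
      p b 0 + p b 1 ≤ B)
    -- γ-approximation on θ-competitive instances
    (happ : ∀ b : Fin 2 → ℝ, (∀ j, b j ∈ Set.Icc 0 B) → ThetaComp2 θ b →
      γ * (x b 0 + x b 1) ≥ opt2 B b) :
    γ ≥ (5 * θ^2 - 1) / (4 * θ^2) :=
  stmt_8_general θ B hθ hB x p γ hx htruth hir hbf happ
end

section
/- Let θ ≥ 1 and B > 0, and consider three indivisible agents with values v_1 = v_2 = v_3 = 1. Call b ∈ [0,B]³ θ-competitive if max_i b_i ≤ θ·min_i b_i. Suppose x maps each θ-competitive b ∈ [0,B]³ to an allocation in {0,1}³ and p maps each such b to payments in ℝ³, satisfying: (1) truthfulness: for each agent i and all θ-competitive c, b ∈ [0,B]³ differing only in coordinate i, p_i(c) − c_i·x_i(c) ≥ p_i(b) − c_i·x_i(b); (2) individual rationality: p_i(b) ≥ b_i·x_i(b) for all i and all θ-competitive b; (3) budget feasibility: p_1(b) + p_2(b) + p_3(b) ≤ B for all θ-competitive b; and (4) γ-approximation against the fractional optimum for some γ ≥ 1: γ·(x_1(b) + x_2(b) + x_3(b)) ≥ opt(b) for all θ-competitive b, where opt(b) :=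 sup{ y_1 + y_2 + y_3 : y ∈ [0,1]³, Σ_i b_i·y_i ≤ B }. Then γ ≥ 3 − 1/θ. -/
/-- Optimal FRACTIONAL knapsack value for three unit-value agents. -/
noncomputable def opt3 (B : ℝ) (b : Fin 3 → ℝ) : ℝ :=
  sSup { s : ℝ | ∃ y : Fin 3 → ℝ, (∀ i, y i ∈ Set.Icc (0:ℝ) 1) ∧
    (∑ i, b i * y i) ≤ B ∧ s = ∑ i, y i }

/-- With unit values, a three-agent cost vector is θ-competitive if
`max_i b i ≤ θ * min_i b i`. -/
def ThetaComp3 (θ : ℝ) (b : Fin 3 → ℝ) : Prop :=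
  max (b 0) (max (b 1) (b 2)) ≤ θ * min (b 0) (min (b 1) (b 2))

/-- The feasible-value set for `opt3` is bounded above by `3`. -/
lemma opt3_bddAbove (B : ℝ) (b : Fin 3 → ℝ) :
    BddAbove { s : ℝ | ∃ y : Fin 3 → ℝ, (∀ i, y i ∈ Set.Icc (0:ℝ) 1) ∧
      (∑ i, b i * y i) ≤ B ∧ s = ∑ i, y i } := by
  refine ⟨3, ?_⟩
  rintro s ⟨y, hy, -, rfl⟩
  have h0 := (hy 0).2
  have h1 := (hy 1).2
  have h2 := (hy 2).2
  rw [Fin.sum_univ_three]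
  linarith

set_option maxHeartbeats 1000000 in
/-- Lower bound of Section 4 / Appendix B of the paper (indivisible case): on
θ-competitive instances, no deterministic truthful, individually rational, budget
feasible mechanism with integral allocations has an approximation guarantee better
than 3 − 1/θ against the fractional optimum. -/
theorem stmt_9 (θ B : ℝ) (hθ : 1 ≤ θ) (hB : 0 < B)
    (x p : (Fin 3 → ℝ) → (Fin 3 → ℝ)) (γ : ℝ) (hγ : 1 ≤ γ)
    -- allocations are integral on θ-competitive instances
    (hx : ∀ b : Fin 3 → ℝ, (∀ j, b j ∈ Set.Icc 0 B) → ThetaComp3 θ b →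
      ∀ i, x b i = 0 ∨ x b i = 1)
    -- truthfulness on θ-competitive instances
    (htruth : ∀ (i : Fin 3) (c b : Fin 3 → ℝ), (∀ j, c j ∈ Set.Icc 0 B) →
      (∀ j, b j ∈ Set.Icc 0 B) → ThetaComp3 θ c → ThetaComp3 θ b →
      (∀ j, j ≠ i → c j = b j) →
      p c i - c i * x c i ≥ p b i - c i * x b i)
    -- individual rationality on θ-competitive instances
    (hir : ∀ b : Fin 3 → ℝ, (∀ j, b j ∈ Set.Icc 0 B) → ThetaComp3 θ b →
      ∀ i, b i * x b i ≤ p b i)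
    -- budget feasibility on θ-competitive instances
    (hbf : ∀ b : Fin 3 → ℝ, (∀ j, b j ∈ Set.Icc 0 B) → ThetaComp3 θ b →
      p b 0 + p b 1 + p b 2 ≤ B)
    -- γ-approximation against the fractional optimum on θ-competitive instances
    (happ : ∀ b : Fin 3 → ℝ, (∀ j, b j ∈ Set.Icc 0 B) → ThetaComp3 θ b →
      γ * (x b 0 + x b 1 + x b 2) ≥ opt3 B b) :
    γ ≥ 3 - 1 / θ := by
  by_contra hcon
  push_neg at hcon
  have hθ0 : (0:ℝ) < θ := lt_of_lt_of_le one_pos hθ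
  have hinvθ : (0:ℝ) < 1 / θ := by positivity
  set q : ℝ := γ - 1 + 1 / θ with hqdef
  have hq0 : 0 < q := by simp only [hqdef]; linarith
  have hq2 : q < 2 := by simp only [hqdef]; linarith
  -- choose ε
  set ε : ℝ := min (B / 2) (B * (2 - q) / (4 * q)) with hεdef
  have hε0 : 0 < ε := by
    apply lt_min
    · linarith
    · exact div_pos (mul_pos hB (by linarith)) (by linarith)
  have hεB : ε ≤ B / 2 := min_le_left _ _
  -- ε * (4q) ≤ B * (2 - q)
  have hε4q : ε * (4 * q) ≤ B * (2 - q) := by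
    have h4q : (0:ℝ) < 4 * q := by linarith
    have := mul_le_mul_of_nonneg_right (min_le_right (B / 2) (B * (2 - q) / (4 * q)))
      (le_of_lt h4q)
    rwa [div_mul_cancel₀ _ (ne_of_gt h4q)] at this
  clear_value q
  set h : ℝ := B / 2 + ε with hhdef
  have hh0 : (0:ℝ) < h := by simp only [hhdef]; linarith
  have hhB : h ≤ B := by simp only [hhdef]; linarith
  have hBh : B < 2 * h := by simp only [hhdef]; linarith
  clear_value ε
  set l : ℝ := h / θ with hldef
  have hl0 : (0:ℝ) < l := by positivity
  have hlh : l ≤ h := by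
    rw [hldef, div_le_iff₀ hθ0]
    nlinarith
  have hθl : θ * l = h := by
    rw [hldef]; field_simp
  clear_value h
  clear_value l
  -- the all-h instance
  set b4 : Fin 3 → ℝ := fun _ => h with hb4
  have hicc4 : ∀ j, b4 j ∈ Set.Icc (0:ℝ) B := fun j => ⟨le_of_lt hh0, hhB⟩
  have hcomp4 : ThetaComp3 θ b4 := by
    simp only [ThetaComp3, hb4, max_self, min_self]
    nlinarith
  -- opt3 at b4 is positive
  have hopt4 : B / h ≤ opt3 B b4 := by
    apply le_csSup (opt3_bddAbove B b4)
    refine ⟨fun _ => B / (3 * h), fun j => ⟨by positivity, ?_⟩, ?_, ?_⟩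
    · rw [div_le_one (by positivity)]; linarith
    · rw [Fin.sum_univ_three]
      have : h * (B / (3 * h)) = B / 3 := by field_simp
      simp only [hb4, this]
      linarith
    · rw [Fin.sum_univ_three]
      field_simp
      ring
  -- there is a winner at b4
  obtain ⟨i, hi⟩ : ∃ i : Fin 3, x b4 i = 1 := by
    by_contra hno
    push_neg at hno
    have h0 : ∀ j : Fin 3, x b4 j = 0 := fun j =>
      (hx b4 hicc4 hcomp4 j).resolve_right (hno j)
    have happ4 := happ b4 hicc4 hcomp4
    rw [h0 0, h0 1, h0 2] at happ4
    have : (0:ℝ) < B / h := by positivity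
    simp only [add_zero, mul_zero] at happ4
    linarith [le_trans hopt4 happ4]
  -- the lowered instance
  set bi : Fin 3 → ℝ := fun j => if j = i then l else h with hbidef
  have hbii : bi i = l := by simp [hbidef]
  have hbine : ∀ j, j ≠ i → bi j = h := by
    intro j hj; simp [hbidef, hj]
  have hicci : ∀ j, bi j ∈ Set.Icc (0:ℝ) B := by
    intro j
    by_cases hj : j = i
    · rw [hj, hbii]; exact ⟨le_of_lt hl0, le_trans hlh hhB⟩
    · rw [hbine j hj]; exact ⟨le_of_lt hh0, hhB⟩
  have hvals : ∀ j, bi j = l ∨ bi j = h := by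
    intro j
    by_cases hj : j = i
    · exact Or.inl (by rw [hj, hbii])
    · exact Or.inr (hbine j hj)
  have hcompi : ThetaComp3 θ bi := by
    have hmax : ∀ j, bi j ≤ h := by
      intro j; rcases hvals j with h' | h' <;> rw [h']
      exact hlh
    have hmin : ∀ j, l ≤ bi j := by
      intro j; rcases hvals j with h' | h' <;> rw [h']
      exact hlh
    show max (bi 0) (max (bi 1) (bi 2)) ≤ θ * min (bi 0) (min (bi 1) (bi 2))
    calc max (bi 0) (max (bi 1) (bi 2)) ≤ h :=
          max_le (hmax 0) (max_le (hmax 1) (hmax 2))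
      _ = θ * l := hθl.symm
      _ ≤ θ * min (bi 0) (min (bi 1) (bi 2)) :=
          mul_le_mul_of_nonneg_left
            (le_min (hmin 0) (le_min (hmin 1) (hmin 2))) (le_of_lt hθ0)
  -- truthfulness both ways for agent i between bi and b4
  have hdiff : ∀ j, j ≠ i → bi j = b4 j := fun j hj => by
    rw [hbine j hj]
  have hA := htruth i bi b4 hicci hicc4 hcompi hcomp4 hdiff
  have hB' := htruth i b4 bi hicc4 hicci hcomp4 hcompi (fun j hj => (hdiff j hj).symm)
  rw [hbii] at hA
  have hb4i : b4 i = h := rfl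
  rw [hb4i] at hB'
  -- agent i still wins at bi
  have hxi1 : x bi i = 1 := by
    rcases hx bi hicci hcompi i with h0 | h1
    · exfalso
      rw [h0, hi] at hA hB'
      -- hA : p bi i - l*0 ≥ p b4 i - l*1 ; hB' : p b4 i - h*1 ≥ p bi i - h*0
      have hge : l ≥ h := by nlinarith
      have hle : l = h := le_antisymm hlh hge
      have : bi = b4 := by
        funext j
        by_cases hj : j = i
        · rw [hj, hbii, hle]
        · exact hdiff j hj
      rw [this, hi] at h0
      norm_num at h0
    · exact h1
  -- payment of agent i at bi is at least h
  have hpi : h ≤ p bi i := by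
    have hir4 := hir b4 hicc4 hcomp4 i
    rw [hb4i, hi, mul_one] at hir4
    rw [hxi1, hi, mul_one] at hA
    linarith
  -- all payments at bi are nonnegative
  have hpnn : ∀ m : Fin 3, 0 ≤ p bi m := by
    intro m
    have hirm := hir bi hicci hcompi m
    have hbm : 0 ≤ bi m := (hicci m).1
    rcases hx bi hicci hcompi m with h' | h' <;> rw [h'] at hirm
    · simpa using hirm
    · rw [mul_one] at hirm; linarith
  -- no other agent wins at bi
  have hz : ∀ j : Fin 3, j ≠ i → x bi j = 0 := by
    intro j hj
    rcases hx bi hicci hcompi j with h0 | h1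
    · exact h0
    · exfalso
      have hpj : h ≤ p bi j := by
        have hirj := hir bi hicci hcompi j
        rw [hbine j hj, h1, mul_one] at hirj
        exact hirj
      have hsum := hbf bi hicci hcompi
      have h2 : p bi i + p bi j ≤ p bi 0 + p bi 1 + p bi 2 := by
        rw [show p bi 0 + p bi 1 + p bi 2 = ∑ m : Fin 3, p bi m from
          (Fin.sum_univ_three _).symm, ← Finset.sum_pair (Ne.symm hj)]
        exact Finset.sum_le_sum_of_subset_of_nonneg (Finset.subset_univ _)
          (fun m _ _ => hpnn m)
      linarith
  -- allocation sum at bi equals 1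
  have hkey : ∀ j : Fin 3, x bi j = if j = i then 1 else 0 := by
    intro j
    by_cases hj : j = i
    · subst hj; simp [hxi1]
    · simp [hj, hz j hj]
  have hxsum : x bi 0 + x bi 1 + x bi 2 = 1 := by
    have hs : ∑ j : Fin 3, (if j = i then (1:ℝ) else 0) = 1 := by simp
    rw [Fin.sum_univ_three] at hs
    rw [hkey 0, hkey 1, hkey 2]
    exact hs
  -- opt3 lower bound at bi
  have hopti : 1 + (B - l) / h ≤ opt3 B bi := by
    apply le_csSup (opt3_bddAbove B bi)
    refine ⟨fun j => if j = i then 1 else (B - l) / (2 * h), ?_, ?_, ?_⟩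
    · intro j
      by_cases hj : j = i
      · simp [hj]
      · simp only [hj, if_false, Set.mem_Icc]
        constructor
        · apply div_nonneg _ (by positivity)
          linarith [le_trans hlh hhB]
        · rw [div_le_one (by positivity)]
          linarith
    · have hcalc : ∀ j : Fin 3, bi j * (if j = i then (1:ℝ) else (B - l) / (2 * h)) =
          (B - l) / 2 + (if j = i then l - (B - l) / 2 else 0) := by
        intro j
        by_cases hj : j = i
        · subst hj; rw [if_pos rfl, if_pos rfl, hbii, mul_one]; ring
        · rw [if_neg hj, if_neg hj, hbine j hj, add_zero]
          field_simp
      rw [Finset.sum_congr rfl (fun j _ => hcalc j), Finset.sum_add_distrib,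
        Finset.sum_ite_eq' Finset.univ i (fun _ => l - (B - l) / 2),
        Finset.sum_const, Finset.card_univ]
      simp only [Finset.mem_univ, if_true, Fintype.card_fin, nsmul_eq_mul]
      push_cast
      linarith
    · have hcalc : ∀ j : Fin 3, (if j = i then (1:ℝ) else (B - l) / (2 * h)) =
          (B - l) / (2 * h) + (if j = i then 1 - (B - l) / (2 * h) else 0) := by
        intro j
        by_cases hj : j = i
        · subst hj; rw [if_pos rfl, if_pos rfl]; ring
        · rw [if_neg hj, if_neg hj, add_zero]
      rw [Finset.sum_congr rfl (fun j _ => hcalc j), Finset.sum_add_distrib,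
        Finset.sum_ite_eq' Finset.univ i (fun _ => 1 - (B - l) / (2 * h)),
        Finset.sum_const, Finset.card_univ]
      simp only [Finset.mem_univ, if_true, Fintype.card_fin, nsmul_eq_mul]
      have hhne : h ≠ 0 := ne_of_gt hh0
      have hexp : (B - l) / h = 2 * ((B - l) / (2 * h)) := by
        field_simp
      rw [hexp]
      push_cast
      ring
  -- conclude γ ≥ 1 + (B - l)/h
  have happi := happ bi hicci hcompi
  rw [hxsum, mul_one] at happi
  have hγbound : 1 + (B - l) / h ≤ γ := le_trans hopti happi
  -- final arithmetic contradiction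
  have hhne : h ≠ 0 := ne_of_gt hh0
  have hθne : θ ≠ 0 := ne_of_gt hθ0
  have hlsub : (B - l) / h = B / h - 1 / θ := by
    rw [sub_div, hldef, div_div, mul_comm θ h, ← div_div, div_self hhne]
  rw [hlsub] at hγbound
  -- so q ≥ B / h
  have hqBh : B / h ≤ q := by
    rw [hqdef]; linarith
  have hqh : B ≤ q * h := by
    rw [div_le_iff₀ hh0] at hqBh
    linarith
  -- h * (4q) ≤ B * (q + 2)
  have h4qh : h * (4 * q) ≤ B * (q + 2) := by
    have : h * (4 * q) = B / 2 * (4 * q) + ε * (4 * q) := by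
      rw [hhdef]; ring
    rw [this]
    linarith [hε4q]
  -- combine: 4qh ≤ B(q+2) ≤ qh(q+2), so q ≥ 2, contradiction
  have hqh0 : 0 < q * h := mul_pos hq0 hh0
  have hfin : B * (q + 2) ≤ q * h * (q + 2) :=
    mul_le_mul_of_nonneg_right hqh (by linarith)
  have h4 : 4 * (q * h) ≤ (q + 2) * (q * h) := by nlinarith [le_trans h4qh hfin]
  have h42 : (4:ℝ) ≤ q + 2 := le_of_mul_le_mul_right h4 hqh0
  linarith
end

section
/- Let B > 0, v > 0 and γ ≥ 1. There do NOT exist functions x : ℝ_{≥0} → [0,1] and p : ℝ_{≥0} → ℝ such that all of the following hold: (1) truthfulness: for all c, b ≥ 0, p(c) − c·x(c) ≥ p(b) − c·x(b); (2) individual rationality: p(b) ≥ b·x(b) for all b ≥ 0; (3) budget feasibility: p(b) ≤ B for all b ≥ 0; and (4) γ-approximation: γ·v·x(b) ≥ v·min(1, B/b) for all b > 0. -/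
/-!
Write `u b = p b - b * x b` for the utility of truthful reporting. Misreporting `2c` at true
cost `c` gives `u c ≥ u (2c) + c * x (2c)`, and once `2c ≥ B` the approximation guarantee forces
`c * x (2c) ≥ B / (2γ)`. Along the costs `B * 2 ^ k` the utility therefore drops by a fixed
positive amount at every step, so it eventually becomes negative, contradicting individual
rationality.
-/

theorem add_nsmul_le_of_forall_succ_add_le {α : Type*} [AddCommMonoid α] [PartialOrder α]
    [IsOrderedAddMonoid α] {u : ℕ → α} {δ : α} (hstep : ∀ n, u (n + 1) + δ ≤ u n) (n : ℕ) :
    u n + n • δ ≤ u 0 := by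
  induction n with
  | zero => simp
  | succ n ih =>
    calc u (n + 1) + (n + 1) • δ = u (n + 1) + δ + n • δ := by rw [succ_nsmul']; abel
      _ ≤ u n + n • δ := by gcongr; exact hstep n
      _ ≤ u 0 := ih

theorem exists_neg_of_forall_succ_add_le {α : Type*} [AddCommGroup α] [LinearOrder α]
    [IsOrderedAddMonoid α] [Archimedean α] {u : ℕ → α} {δ : α} (hδ : 0 < δ)
    (hstep : ∀ n, u (n + 1) + δ ≤ u n) : ∃ n, u n < 0 := by
  obtain ⟨n, hn⟩ := exists_lt_nsmul hδ (u 0)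
  exact ⟨n, (add_lt_iff_neg_right _).mp ((add_nsmul_le_of_forall_succ_add_le hstep n).trans_lt hn)⟩

theorem le_mul_mul_of_approx {B v γ b y : ℝ} (hv : 0 < v) (hb : B ≤ b) (hb0 : 0 < b)
    (happ : γ * (v * y) ≥ v * min 1 (B / b)) : B ≤ γ * (b * y) := by
  rw [min_eq_right ((div_le_one hb0).mpr hb), mul_left_comm, ge_iff_le,
    mul_le_mul_iff_right₀ hv, div_le_iff₀ hb0] at happ
  linarith

theorem utility_double_add_le {x p : ℝ → ℝ} {B γ c b : ℝ} (hγ : 0 < γ) (hb : b = 2 * c)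
    (hmis : p c - c * x c ≥ p b - c * x b) (hbound : B ≤ γ * (b * x b)) :
    p b - b * x b + B / (2 * γ) ≤ p c - c * x c := by
  subst hb
  have hgain : B / (2 * γ) ≤ c * x (2 * c) := by
    rw [div_le_iff₀ (by positivity)]
    linarith
  linarith

/-- Impossibility result from the Introduction of the paper: for a single divisible
agent whose true cost is not assumed to be bounded by the budget, no truthful,
individually rational, budget feasible mechanism has a finite approximation
guarantee. -/
theorem stmt_10 (B v γ : ℝ) (hB : 0 < B) (hv : 0 < v) (hγ : 1 ≤ γ) :
    ¬ ∃ (x p : ℝ → ℝ),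
      -- allocations lie in [0,1]
      (∀ b : ℝ, 0 ≤ b → x b ∈ Set.Icc (0:ℝ) 1) ∧
      -- truthfulness
      (∀ c b : ℝ, 0 ≤ c → 0 ≤ b → p c - c * x c ≥ p b - c * x b) ∧
      -- individual rationality
      (∀ b : ℝ, 0 ≤ b → b * x b ≤ p b) ∧
      -- budget feasibility
      (∀ b : ℝ, 0 ≤ b → p b ≤ B) ∧
      -- γ-approximation against the fractional optimum v · min(1, B/b)
      (∀ b : ℝ, 0 < b → γ * (v * x b) ≥ v * min 1 (B / b)) := by
  rintro ⟨x, p, -, htr, hir, -, happ⟩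
  let c : ℕ → ℝ := fun k => B * 2 ^ k
  have hc : ∀ k, 0 < c k := fun k => by positivity
  have hB_le : ∀ k, B ≤ c k := fun k => le_mul_of_one_le_right hB.le (one_le_pow₀ one_le_two)
  let u : ℕ → ℝ := fun k => p (c k) - c k * x (c k)
  have hγ0 : 0 < γ := one_pos.trans_le hγ
  have hstep : ∀ k, u (k + 1) + B / (2 * γ) ≤ u k := fun k =>
    utility_double_add_le hγ0 (by simp only [c, pow_succ]; ring)
      (htr _ _ (hc k).le (hc _).le) (le_mul_mul_of_approx hv (hB_le _) (hc _) (happ _ (hc _)))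
  obtain ⟨n, hn⟩ := exists_neg_of_forall_succ_add_le (by positivity) hstep
  exact hn.not_ge (sub_nonneg.mpr (hir (c n) (hc n).le))
end

section
/- Let n ≥ 1, let agents i ∈ {1,…,n} have values v_i ≥ 0 and costs c_i ≥ 0, let B ≥ 0 and β > 0. For a subset S ⊆ {1,…,n} define opt(S) := sup{ Σ_{i∈S} v_i·y_i : y ∈ [0,1]^S, Σ_{i∈S} c_i·y_i ≤ B }. If an agent i satisfies v_i ≥ β·opt({1,…,n} \ {i}), then (1+β)·v_i ≥ β·opt({1,…,n}). -/
/-- Optimal fractional knapsack value restricted to the agent set `S`. -/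
noncomputable def optOn (n : ℕ) (v c : Fin n → ℝ) (B : ℝ) (S : Finset (Fin n)) : ℝ :=
  sSup { s : ℝ | ∃ y : Fin n → ℝ, (∀ i, y i ∈ Set.Icc (0:ℝ) 1) ∧
    (∑ i ∈ S, c i * y i) ≤ B ∧ s = ∑ i ∈ S, v i * y i }

lemma optOn_bdd (n : ℕ) (v c : Fin n → ℝ) (hv : ∀ i, 0 ≤ v i) (B : ℝ)
    (S : Finset (Fin n)) :
    BddAbove { s : ℝ | ∃ y : Fin n → ℝ, (∀ i, y i ∈ Set.Icc (0:ℝ) 1) ∧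
      (∑ i ∈ S, c i * y i) ≤ B ∧ s = ∑ i ∈ S, v i * y i } := by
  refine ⟨∑ i ∈ S, v i, ?_⟩
  rintro s ⟨y, hy, -, rfl⟩
  apply Finset.sum_le_sum
  intro j _
  calc v j * y j ≤ v j * 1 := by
        exact mul_le_mul_of_nonneg_left (hy j).2 (hv j)
    _ = v j := mul_one _

lemma optOn_nonneg (n : ℕ) (v c : Fin n → ℝ) (hv : ∀ i, 0 ≤ v i) (B : ℝ) (hB : 0 ≤ B)
    (S : Finset (Fin n)) : 0 ≤ optOn n v c B S := by
  refine le_csSup (optOn_bdd n v c hv B S) ?_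
  exact ⟨0, fun i => ⟨le_refl _, zero_le_one⟩, by simp [hB], by simp⟩

/-- If agent `i` satisfies `v i ≥ β · opt_{−i}`, then `(1+β) · v i ≥ β · opt`. -/
theorem stmt_12 (n : ℕ) (hn : 1 ≤ n) (v c : Fin n → ℝ)
    (hv : ∀ i, 0 ≤ v i) (hc : ∀ i, 0 ≤ c i) (B : ℝ) (hB : 0 ≤ B)
    (β : ℝ) (hβ : 0 < β) (i : Fin n)
    (hi : β * optOn n v c B (Finset.univ.erase i) ≤ v i) :
    β * optOn n v c B Finset.univ ≤ (1 + β) * v i := by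
  have hvi : 0 ≤ v i := hv i
  have hkey : optOn n v c B Finset.univ ≤
      optOn n v c B (Finset.univ.erase i) + v i := by
    apply Real.sSup_le
    · rintro s ⟨y, hy, hcost, rfl⟩
      have hsplit : ∑ j, v j * y j = v i * y i + ∑ j ∈ Finset.univ.erase i, v j * y j :=
        (Finset.add_sum_erase _ _ (Finset.mem_univ i)).symm
      rw [hsplit]
      have h1 : v i * y i ≤ v i := by
        calc v i * y i ≤ v i * 1 := mul_le_mul_of_nonneg_left (hy i).2 hvi
          _ = v i := mul_one _
      have h2 : ∑ j ∈ Finset.univ.erase i, v j * y j ≤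
          optOn n v c B (Finset.univ.erase i) := by
        refine le_csSup (optOn_bdd n v c hv B _) ?_
        refine ⟨y, hy, ?_, rfl⟩
        refine le_trans ?_ hcost
        refine Finset.sum_le_sum_of_subset_of_nonneg (Finset.erase_subset _ _) ?_
        intro j _ _
        exact mul_nonneg (hc j) (hy j).1
      linarith
    · have := optOn_nonneg n v c hv B hB (Finset.univ.erase i)
      linarith
  have : β * optOn n v c B Finset.univ ≤
      β * optOn n v c B (Finset.univ.erase i) + β * v i := by
    nlinarith
  nlinarith
end

section
/- Let l : ℝ → ℝ be non-decreasing on [0,∞) and concave on [0,∞). Let 0 ≤ y ≤ Y, v ≥ 0, and 0 ≤ x ≤ x' ≤ 1. Then x·( l(Y + v) − l(Y) ) ≤ l(y + x'·v) − l(y). -/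
/-!
The increment `l (Y + v) - l Y` is nonnegative by monotonicity and, by concavity, no larger than
the increment `l (y + v) - l y` taken further left. Concavity along the segment from `y` to
`y + v` then bounds `x' (l (y + v) - l y)` by `l (y + x' v) - l y`, and `x ≤ x'` finishes.
-/

section

variable {𝕜 : Type*} [Field 𝕜] [LinearOrder 𝕜] [IsStrictOrderedRing 𝕜]

theorem ConcaveOn.smul_sub_le_sub {E β : Type*} [AddCommGroup E] [Module 𝕜 E]
    [AddCommGroup β] [PartialOrder β] [IsOrderedAddMonoid β] [Module 𝕜 β]
    {s : Set E} {f : E → β} (hf : ConcaveOn 𝕜 s f) {x v : E} (hx : x ∈ s) (hxv : x + v ∈ s)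
    {t : 𝕜} (ht₀ : 0 ≤ t) (ht₁ : t ≤ 1) :
    t • (f (x + v) - f x) ≤ f (x + t • v) - f x := by
  have h := hf.2 hx hxv (sub_nonneg.2 ht₁) ht₀ (sub_add_cancel 1 t)
  have hcomb : (1 - t) • x + t • (x + v) = x + t • v := by
    rw [smul_add, sub_smul, one_smul]; abel
  rw [hcomb, sub_smul, one_smul] at h
  rw [smul_sub, le_sub_iff_add_le]
  calc t • f (x + v) - t • f x + f x = f x - t • f x + t • f (x + v) := by abel
    _ ≤ _ := h

theorem ConcaveOn.map_add_sub_map_le_of_le {s : Set 𝕜} {f : 𝕜 → 𝕜} (hf : ConcaveOn 𝕜 s f)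
    {x y d : 𝕜} (hx : x ∈ s) (hyd : y + d ∈ s) (hxy : x ≤ y) (hd : 0 ≤ d) :
    f (y + d) - f y ≤ f (x + d) - f x := by
  rcases hxy.eq_or_lt with rfl | hxy
  · rfl
  -- `y` and `x + d` sit in `[x, y + d]` with mirrored weights; summing the two concavity
  -- inequalities gives `f x + f (y + d) ≤ f y + f (x + d)`.
  set D := y + d - x
  have hD : 0 < D := by linarith
  have ha : 0 ≤ d / D := div_nonneg hd hD.le
  have hb : 0 ≤ (y - x) / D := div_nonneg (sub_nonneg.2 hxy.le) hD.le
  have hab : d / D + (y - x) / D = 1 := by field_simp; ring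
  have hfy := hf.2 hx hyd ha hb hab
  have hfxd := hf.2 hx hyd hb ha ((add_comm _ _).trans hab)
  simp only [smul_eq_mul] at hfy hfxd
  rw [show d / D * x + (y - x) / D * (y + d) = y by field_simp; ring] at hfy
  rw [show (y - x) / D * x + d / D * (y + d) = x + d by field_simp; ring] at hfxd
  linear_combination hfy + hfxd - (f x + f (y + d)) * hab

end

/-- Key step in the budget feasibility proof of mechanism DA-con: for a concave
non-decreasing `l`, `0 ≤ y ≤ Y`, `v ≥ 0` and `0 ≤ x ≤ x' ≤ 1`,
`x·(l(Y+v) − l(Y)) ≤ l(y + x'·v) − l(y)`. -/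
theorem stmt_15 (l : ℝ → ℝ)
    (hmono : MonotoneOn l (Set.Ici (0:ℝ)))
    (hconc : ConcaveOn ℝ (Set.Ici (0:ℝ)) l)
    (y Y v x x' : ℝ) (hy : 0 ≤ y) (hyY : y ≤ Y) (hv : 0 ≤ v)
    (hx0 : 0 ≤ x) (hxx' : x ≤ x') (hx'1 : x' ≤ 1) :
    x * (l (Y + v) - l Y) ≤ l (y + x' * v) - l y := by
  have hY : Y ∈ Set.Ici (0:ℝ) := hy.trans hyY
  have hYv : Y + v ∈ Set.Ici (0:ℝ) := add_nonneg hY hv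
  have hx'0 : 0 ≤ x' := hx0.trans hxx'
  have hincr : 0 ≤ l (Y + v) - l Y :=
    sub_nonneg.2 (hmono hY hYv (le_add_of_nonneg_right hv))
  calc x * (l (Y + v) - l Y) ≤ x' * (l (Y + v) - l Y) := mul_le_mul_of_nonneg_right hxx' hincr
    _ ≤ x' * (l (y + v) - l y) :=
      mul_le_mul_of_nonneg_left (hconc.map_add_sub_map_le_of_le hy hYv hyY hv) hx'0
    _ ≤ l (y + x' * v) - l y :=
      hconc.smul_sub_le_sub hy (add_nonneg hy hv) hx'0 hx'1
end
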